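/- arXiv:2512.12292 — 7 statements merged into one kernel-verified Lean document; each statement's English description precedes it below -/
import Mathlib

section
/- Set-cover to VED reduction (star-convex case), forward direction: given a set system (S, F) with a cover C of size t, the constructed star-convex bipartite graph G has a vertex-edge dominating set of size t + 1, namely D = {b_j : C_j ∈ C} ∪ {u}. -/
open SimpleGraph

/-- The closed neighbourhood `N[v] = {v} ∪ N(v)` of a vertex. -/
def closedNbhd {V : Type*} (G : SimpleGraph V) (v : V) : Set V :=
  insert v (G.neighborSet v)

/-- `D` is a vertex-edge dominating set: every edge `uv` has a vertex of `D`
in `N[u] ∪ N[v]`. -/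
def IsVEDomSet {V : Type*} (G : SimpleGraph V) (D : Set V) : Prop :=
  ∀ ⦃u v : V⦄, G.Adj u v → ((closedNbhd G u ∪ closedNbhd G v) ∩ D).Nonempty

/-- The vertex-edge domination number `γ_ve(G)`. -/
noncomputable def vedNumber {V : Type*} (G : SimpleGraph V) : ℕ :=
  sInf {n | ∃ D : Set V, IsVEDomSet G D ∧ D.ncard = n}

/-- Vertices of the star-convex reduction graph: element vertices `a i`,
set vertices `b j`, pendants `z i`, and the special vertices `u`, `v`, `u'`. -/
inductive SCVert (p q : ℕ) : Type
  | a : Fin p → SCVert p q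
  | b : Fin q → SCVert p q
  | z : Fin p → SCVert p q
  | u : SCVert p q
  | v : SCVert p q
  | u' : SCVert p q

/-- The edge relation of the star-convex reduction graph, for the membership
relation `M i j` meaning `s i ∈ C j`. -/
def scRel {p q : ℕ} (M : Fin p → Fin q → Prop) : SCVert p q → SCVert p q → Prop
  | .a i, .b j => M i j
  | .a i, .z i' => i = i'
  | .u, .b _ => True
  | .u, .v => True
  | .v, .u' => True
  | _, _ => False

/-- The star-convex reduction graph. -/
def scGraph {p q : ℕ} (M : Fin p → Fin q → Prop) : SimpleGraph (SCVert p q) :=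
  SimpleGraph.fromRel (scRel M)

/-!
Every edge of the graph has an endpoint that is not one of the leaves `z i`, `u'`, and every
non-leaf has a vertex of `D` in its closed neighbourhood: `a i` is adjacent to `b j` for a
set `C j` of the cover containing `s i`, while `b j`, `u` and `v` all lie in `N[u]`.
-/

lemma isVEDomSet_of_forall_adj {V : Type*} {G : SimpleGraph V} {D : Set V}
    (h : ∀ ⦃x y : V⦄, G.Adj x y →
      (closedNbhd G x ∩ D).Nonempty ∨ (closedNbhd G y ∩ D).Nonempty) :
    IsVEDomSet G D := by
  intro x y hxy
  rcases h hxy with ⟨w, hwx, hwD⟩ | ⟨w, hwy, hwD⟩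
  · exact ⟨w, Or.inl hwx, hwD⟩
  · exact ⟨w, Or.inr hwy, hwD⟩

namespace SCVert

variable {p q : ℕ}

def IsLeaf : SCVert p q → Prop
  | .z _ => True
  | .u' => True
  | _ => False

lemma b_injective : Function.Injective (SCVert.b : Fin q → SCVert p q) :=
  fun _ _ => SCVert.b.inj

end SCVert

section ScGraph

variable {p q : ℕ} (M : Fin p → Fin q → Prop)

lemma scGraph_adj_not_isLeaf {x y : SCVert p q} (h : (scGraph M).Adj x y) :
    ¬ x.IsLeaf ∨ ¬ y.IsLeaf := by
  obtain ⟨-, hrel⟩ := (fromRel_adj _ _ _).mp h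
  cases x <;> cases y <;> simp_all [scRel, SCVert.IsLeaf]

lemma u_mem_closedNbhd_b (j : Fin q) :
    (SCVert.u : SCVert p q) ∈ closedNbhd (scGraph M) (.b j) :=
  Or.inr (by simp [scGraph, scRel])

lemma u_mem_closedNbhd_v : (SCVert.u : SCVert p q) ∈ closedNbhd (scGraph M) .v :=
  Or.inr (by simp [scGraph, scRel])

lemma b_mem_closedNbhd_a {i : Fin p} {j : Fin q} (h : M i j) :
    (SCVert.b j : SCVert p q) ∈ closedNbhd (scGraph M) (.a i) :=
  Or.inr (by simp [scGraph, scRel, h])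

lemma closedNbhd_inter_nonempty_of_not_isLeaf {C : Finset (Fin q)}
    (hcover : ∀ i : Fin p, ∃ j ∈ C, M i j) {w : SCVert p q} (hw : ¬ w.IsLeaf) :
    (closedNbhd (scGraph M) w ∩ (SCVert.b '' ↑C ∪ {SCVert.u})).Nonempty := by
  have hu : SCVert.u ∈ (SCVert.b '' ↑C ∪ {SCVert.u} : Set (SCVert p q)) := Or.inr rfl
  cases w with
  | a i =>
    obtain ⟨j, hjC, hij⟩ := hcover i
    exact ⟨.b j, b_mem_closedNbhd_a M hij, Or.inl ⟨j, hjC, rfl⟩⟩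
  | b j => exact ⟨.u, u_mem_closedNbhd_b M j, hu⟩
  | u => exact ⟨.u, Set.mem_insert _ _, hu⟩
  | v => exact ⟨.u, u_mem_closedNbhd_v M, hu⟩
  | z => exact hw.elim trivial
  | u' => exact hw.elim trivial

end ScGraph

theorem sc_forward {p q t : ℕ} (M : Fin p → Fin q → Prop) (C : Finset (Fin q))
    (hcover : ∀ i : Fin p, ∃ j ∈ C, M i j) (hcard : C.card = t) :
    IsVEDomSet (scGraph M)
        ((fun j => SCVert.b j) '' ↑C ∪ {SCVert.u} : Set (SCVert p q)) ∧
      ((fun j => SCVert.b j) '' ↑C ∪ {SCVert.u} : Set (SCVert p q)).ncard = t + 1 := by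
  refine ⟨isVEDomSet_of_forall_adj fun x y hxy => ?_, ?_⟩
  · exact (scGraph_adj_not_isLeaf M hxy).imp
      (closedNbhd_inter_nonempty_of_not_isLeaf M hcover)
      (closedNbhd_inter_nonempty_of_not_isLeaf M hcover)
  · have hu : (SCVert.u : SCVert p q) ∉ SCVert.b '' ↑C := by
      rintro ⟨j, -, ⟨⟩⟩
    rw [Set.union_singleton, Set.ncard_insert_of_notMem hu,
      Set.ncard_image_of_injective _ SCVert.b_injective, Set.ncard_coe_finset, hcard]
end

section
/- Set-cover to VED reduction (star-convex case), backward direction: if the constructed graph G has a vertex-edge dominating set of size at most t + 1, then the set system (S, F) has a cover of size at most t. -/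
open SimpleGraph

deriving instance DecidableEq for SCVert

/-- Choice of a set index dominating a vertex. -/
noncomputable def scChoose {p q : ℕ} {M : Fin p → Fin q → Prop}
    (hne : ∀ i : Fin p, ∃ j, M i j) : SCVert p q → Finset (Fin q)
  | .b j => {j}
  | .a i => {(hne i).choose}
  | .z i => {(hne i).choose}
  | _ => ∅

lemma scChoose_card_le {p q : ℕ} {M : Fin p → Fin q → Prop}
    (hne : ∀ i : Fin p, ∃ j, M i j) (x : SCVert p q) :
    (scChoose hne x).card ≤ 1 := by
  cases x <;> simp [scChoose]

lemma sc_nbhd_v (p q : ℕ) (M : Fin p → Fin q → Prop) (x : SCVert p q)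
    (hx : x ∈ closedNbhd (scGraph M) (.v) ∪ closedNbhd (scGraph M) (.u')) :
    x = SCVert.u ∨ x = SCVert.v ∨ x = SCVert.u' := by
  cases x <;>
    simp_all [closedNbhd, scGraph, scRel, SimpleGraph.fromRel_adj,
      SimpleGraph.mem_neighborSet]

lemma sc_nbhd_a (p q : ℕ) (M : Fin p → Fin q → Prop) (i : Fin p) (x : SCVert p q)
    (hx : x ∈ closedNbhd (scGraph M) (.a i) ∪ closedNbhd (scGraph M) (.z i)) :
    x = SCVert.a i ∨ x = SCVert.z i ∨ ∃ j, x = SCVert.b j ∧ M i j := by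
  cases x <;>
    simp_all [closedNbhd, scGraph, scRel, SimpleGraph.fromRel_adj,
      SimpleGraph.mem_neighborSet]

theorem sc_backward {p q t : ℕ} (M : Fin p → Fin q → Prop)
    (hne : ∀ i : Fin p, ∃ j, M i j)
    (D : Finset (SCVert p q)) (hD : IsVEDomSet (scGraph M) ↑D)
    (hcard : D.card ≤ t + 1) :
    ∃ C : Finset (Fin q), (∀ i : Fin p, ∃ j ∈ C, M i j) ∧ C.card ≤ t := by
  classical
  -- the edge v u' forces a useless vertex in D
  have hadjv : (scGraph M).Adj SCVert.v SCVert.u' := by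
    simp [scGraph, scRel, SimpleGraph.fromRel_adj]
  obtain ⟨w, hw1, hw2⟩ := hD hadjv
  have hwD : w ∈ D := hw2
  have hw3 := sc_nbhd_v p q M w hw1
  set D' := D.erase w with hD'
  have hD'card : D'.card ≤ t := by
    rw [hD', Finset.card_erase_of_mem hwD]
    omega
  refine ⟨D'.biUnion (scChoose hne), ?_, ?_⟩
  · intro i
    have hadj : (scGraph M).Adj (SCVert.a i) (SCVert.z i) := by
      simp [scGraph, scRel, SimpleGraph.fromRel_adj]
    obtain ⟨x, hx1, hx2⟩ := hD hadj
    have hxD : x ∈ D := hx2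
    have hx3 := sc_nbhd_a p q M i x hx1
    have hxw : x ≠ w := by
      rcases hw3 with h|h|h <;> rcases hx3 with h'|h'|⟨j,h',_⟩ <;> subst h <;> subst h' <;> simp
    have hxD' : x ∈ D' := Finset.mem_erase.2 ⟨hxw, hxD⟩
    rcases hx3 with h|h|⟨j,h,hMj⟩
    · exact ⟨(hne i).choose, Finset.mem_biUnion.2 ⟨x, hxD', by simp [h, scChoose]⟩,
        (hne i).choose_spec⟩
    · exact ⟨(hne i).choose, Finset.mem_biUnion.2 ⟨x, hxD', by simp [h, scChoose]⟩,
        (hne i).choose_spec⟩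
    · exact ⟨j, Finset.mem_biUnion.2 ⟨x, hxD', by simp [h, scChoose]⟩, hMj⟩
  · calc (D'.biUnion (scChoose hne)).card ≤ ∑ x ∈ D', (scChoose hne x).card :=
        Finset.card_biUnion_le
      _ ≤ ∑ _x ∈ D', 1 := Finset.sum_le_sum fun x _ => scChoose_card_le hne x
      _ = D'.card := by simp
      _ ≤ t := hD'card
end

section
/- The graph constructed in the star-convex reduction is star-convex bipartite: there is a star T on X = A ∪ {u, u'} with centre u such that for every y ∈ Y = B ∪ Z ∪ {v}, the neighbourhood N(y) induces a subtree of T. -/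
open SimpleGraph

/-- The star on the vertices in `Xs` with centre `c` (as a graph on all of `V`). -/
def starOn {V : Type*} (Xs : Set V) (c : V) : SimpleGraph V where
  Adj x y := x ≠ y ∧ x ∈ Xs ∧ y ∈ Xs ∧ (x = c ∨ y = c)
  symm := by
    constructor
    intro x y h
    exact ⟨h.1.symm, h.2.2.1, h.2.1, h.2.2.2.symm⟩
  loopless := ⟨fun x h => h.1 rfl⟩

lemma starOn_induce_preconnected {V : Type*} {Xs S : Set V} {c : V} (hS : S ⊆ Xs)
    (h : S.Subsingleton ∨ c ∈ S) : ((starOn Xs c).induce S).Preconnected := by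
  rcases h with hsub | hc
  · have := hsub.coe_sort
    exact Preconnected.of_subsingleton
  · have reach_centre : ∀ x : S, ((starOn Xs c).induce S).Reachable x ⟨c, hc⟩ := by
      intro x
      by_cases hx : (x : V) = c
      · obtain rfl : x = ⟨c, hc⟩ := Subtype.ext hx
        rfl
      · exact Adj.reachable ⟨hx, hS x.2, hS hc, Or.inr rfl⟩
    exact fun x y => (reach_centre x).trans (reach_centre y).symm

section

variable {p q : ℕ} (M : Fin p → Fin q → Prop)

lemma scGraph_neighborSet_z (i : Fin p) :
    (scGraph M).neighborSet (.z i) = {.a i} := by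
  ext w
  cases w <;> simp [scGraph, scRel, eq_comm]

lemma scGraph_neighborSet_b (j : Fin q) :
    (scGraph M).neighborSet (.b j) = insert .u (SCVert.a '' {i | M i j}) := by
  ext w
  cases w <;> simp [scGraph, scRel]

lemma scGraph_neighborSet_v :
    (scGraph M).neighborSet (.v : SCVert p q) = {.u, .u'} := by
  ext w
  cases w <;> simp [scGraph, scRel]

lemma scGraph_neighborSet_subset {y : SCVert p q}
    (hy : y ∈ Set.range SCVert.z ∪ Set.range SCVert.b ∪ {SCVert.v}) :
    (scGraph M).neighborSet y ⊆ Set.range SCVert.a ∪ {SCVert.u, SCVert.u'} := by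
  rcases hy with (⟨i, rfl⟩ | ⟨j, rfl⟩) | rfl
  · simp [scGraph_neighborSet_z]
  · simp [scGraph_neighborSet_b, Set.subset_def]
  · simp [scGraph_neighborSet_v]

end

theorem sc_star_convex {p q : ℕ} (M : Fin p → Fin q → Prop) :
    ∀ y : SCVert p q,
      y ∈ (Set.range (SCVert.z (p := p) (q := q)) ∪
            Set.range (SCVert.b (p := p) (q := q)) ∪ {SCVert.v}) →
      (scGraph M).neighborSet y ⊆
          (Set.range (SCVert.a (p := p) (q := q)) ∪ {SCVert.u, SCVert.u'}) ∧
        ((starOn (Set.range (SCVert.a (p := p) (q := q)) ∪ {SCVert.u, SCVert.u'})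
            SCVert.u).induce ((scGraph M).neighborSet y)).Preconnected := by
  intro y hy
  have hX := scGraph_neighborSet_subset M hy
  refine ⟨hX, starOn_induce_preconnected hX ?_⟩
  rcases hy with (⟨i, rfl⟩ | ⟨j, rfl⟩) | rfl
  · exact .inl (by simp [scGraph_neighborSet_z])
  · exact .inr (by simp [scGraph_neighborSet_b])
  · exact .inr (by simp [scGraph_neighborSet_v])
end

section
/- Set-cover to VED reduction (comb-convex case), forward direction: given a set system (S, F) with a cover C of size t, the constructed comb-convex bipartite graph G has a vertex-edge dominating set of size t + 1, namely D = {b_j : C_j ∈ C} ∪ {r_{p+1}}. -/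
open SimpleGraph

/-- Vertices of the comb-convex reduction graph. -/
inductive CCVert (p q : ℕ) : Type
  | a : Fin p → CCVert p q
  | b : Fin q → CCVert p q
  | z : Fin p → CCVert p q
  | r : Fin (p + 1) → CCVert p q
  | w : CCVert p q
  | r' : CCVert p q

/-- The edge relation of the comb-convex reduction graph, for the membership
relation `M i j` meaning `s i ∈ C j`. -/
def ccRel {p q : ℕ} (M : Fin p → Fin q → Prop) : CCVert p q → CCVert p q → Prop
  | .a i, .b j => M i j
  | .a i, .z i' => i = i'
  | .b _, .r _ => True
  | .r k, .w => k = Fin.last p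
  | .w, .r' => True
  | _, _ => False

/-- The comb-convex reduction graph. -/
def ccGraph {p q : ℕ} (M : Fin p → Fin q → Prop) : SimpleGraph (CCVert p q) :=
  SimpleGraph.fromRel (ccRel M)

lemma cc_adj {p q : ℕ} (M : Fin p → Fin q → Prop) {u v : CCVert p q} :
    (ccGraph M).Adj u v ↔ u ≠ v ∧ (ccRel M u v ∨ ccRel M v u) :=
  SimpleGraph.fromRel_adj _ _ _

lemma mem_nbhd_of_rel {p q : ℕ} {M : Fin p → Fin q → Prop} {u v : CCVert p q}
    (hne : u ≠ v) (h : ccRel M u v ∨ ccRel M v u) :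
    v ∈ closedNbhd (ccGraph M) u :=
  Or.inr ((cc_adj M).mpr ⟨hne, h⟩)

theorem cc_forward {p q t : ℕ} (M : Fin p → Fin q → Prop) (C : Finset (Fin q))
    (hcover : ∀ i : Fin p, ∃ j ∈ C, M i j) (hcard : C.card = t) :
    IsVEDomSet (ccGraph M)
        ((fun j => CCVert.b j) '' ↑C ∪ {CCVert.r (Fin.last p)} : Set (CCVert p q)) ∧
      ((fun j => CCVert.b j) '' ↑C ∪ {CCVert.r (Fin.last p)} :
          Set (CCVert p q)).ncard = t + 1 := by
  set D : Set (CCVert p q) :=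
    ((fun j => CCVert.b j) '' ↑C ∪ {CCVert.r (Fin.last p)}) with hD
  have hDr : (CCVert.r (Fin.last p) : CCVert p q) ∈ D := Or.inr rfl
  have hDb : ∀ j ∈ C, (CCVert.b j : CCVert p q) ∈ D := fun j hj => Or.inl ⟨j, hj, rfl⟩
  -- for an element vertex a i, some b j' in the cover is a neighbor
  have ha : ∀ i : Fin p, ∃ x, x ∈ closedNbhd (ccGraph M) (CCVert.a i) ∧ x ∈ D := by
    intro i
    obtain ⟨j, hjC, hM⟩ := hcover i
    exact ⟨CCVert.b j,
      mem_nbhd_of_rel (by simp) (Or.inl hM), hDb j hjC⟩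
  -- for a set vertex b j, r_last is a neighbor
  have hb : ∀ j : Fin q, ∃ x, x ∈ closedNbhd (ccGraph M) (CCVert.b j) ∧ x ∈ D := by
    intro j
    exact ⟨CCVert.r (Fin.last p),
      mem_nbhd_of_rel (by simp) (Or.inl trivial), hDr⟩
  -- for w, r_last is a neighbor
  have hw : ∃ x, x ∈ closedNbhd (ccGraph M) (CCVert.w : CCVert p q) ∧ x ∈ D :=
    ⟨CCVert.r (Fin.last p), mem_nbhd_of_rel (by simp) (Or.inr rfl), hDr⟩
  have hr : ∃ x, x ∈ closedNbhd (ccGraph M) (CCVert.r (Fin.last p) : CCVert p q) ∧ x ∈ D :=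
    ⟨CCVert.r (Fin.last p), Or.inl rfl, hDr⟩
  constructor
  · intro u v huv
    rw [cc_adj] at huv
    obtain ⟨hne, hrel⟩ := huv
    cases u <;> cases v <;> simp only [ccRel] at hrel <;>
      try exact (hrel.elim id id).elim
    case a.b i j => exact (ha i).imp fun x ⟨h1, h2⟩ => ⟨Or.inl h1, h2⟩
    case b.a j i => exact (ha i).imp fun x ⟨h1, h2⟩ => ⟨Or.inr h1, h2⟩
    case a.z i i' => exact (ha i).imp fun x ⟨h1, h2⟩ => ⟨Or.inl h1, h2⟩
    case z.a i' i => exact (ha i).imp fun x ⟨h1, h2⟩ => ⟨Or.inr h1, h2⟩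
    case b.r j k => exact (hb j).imp fun x ⟨h1, h2⟩ => ⟨Or.inl h1, h2⟩
    case r.b k j => exact (hb j).imp fun x ⟨h1, h2⟩ => ⟨Or.inr h1, h2⟩
    case r.w k =>
      have : k = Fin.last p := hrel.elim id False.elim
      subst this
      exact hr.imp fun x ⟨h1, h2⟩ => ⟨Or.inl h1, h2⟩
    case w.r k =>
      have : k = Fin.last p := hrel.elim False.elim id
      subst this
      exact hr.imp fun x ⟨h1, h2⟩ => ⟨Or.inr h1, h2⟩
    case w.r' => exact hw.imp fun x ⟨h1, h2⟩ => ⟨Or.inl h1, h2⟩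
    case r'.w => exact hw.imp fun x ⟨h1, h2⟩ => ⟨Or.inr h1, h2⟩
  · have hdisj : Disjoint ((fun j => CCVert.b j) '' ↑C)
        ({CCVert.r (Fin.last p)} : Set (CCVert p q)) := by
      simp [Set.disjoint_singleton_right]
    rw [hD, Set.ncard_union_eq hdisj (C.finite_toSet.image _) (Set.finite_singleton _),
      Set.ncard_image_of_injective _ (fun x y h => by injection h),
      Set.ncard_coe_finset, hcard, Set.ncard_singleton]
end

section
/- Set-cover to VED reduction (comb-convex case), backward direction: if the constructed graph G has a vertex-edge dominating set of size at most t + 1, then (S, F) has a cover of size at most t. -/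
open SimpleGraph

lemma cc_nbhd_az {p q : ℕ} (M : Fin p → Fin q → Prop) (i : Fin p) (d : CCVert p q)
    (hd : d ∈ closedNbhd (ccGraph M) (.a i) ∪ closedNbhd (ccGraph M) (.z i)) :
    d = .a i ∨ d = .z i ∨ ∃ j, d = .b j ∧ M i j := by
  simp only [closedNbhd, Set.mem_union, Set.mem_insert_iff, SimpleGraph.mem_neighborSet,
    ccGraph, SimpleGraph.fromRel_adj] at hd
  rcases d with i' | j | i' | k | _ | _
  case a =>
    simp only [ccRel] at hd
    have : i' = i := by simp_all
    subst this; left; rfl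
  case b =>
    simp only [ccRel] at hd
    have : M i j := by tauto
    exact Or.inr (Or.inr ⟨j, rfl, this⟩)
  case z =>
    simp only [ccRel] at hd
    have : i' = i := by simp_all; tauto
    subst this; right; left; rfl
  all_goals simp only [ccRel] at hd; tauto

lemma cc_nbhd_wr' {p q : ℕ} (M : Fin p → Fin q → Prop) (d : CCVert p q)
    (hd : d ∈ closedNbhd (ccGraph M) (.w) ∪ closedNbhd (ccGraph M) (.r')) :
    d = .w ∨ d = .r (Fin.last p) ∨ d = .r' := by
  simp only [closedNbhd, Set.mem_union, Set.mem_insert_iff, SimpleGraph.mem_neighborSet,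
    ccGraph, SimpleGraph.fromRel_adj] at hd
  rcases d with i' | j | i' | k | _ | _ <;>
    simp only [ccRel, or_false, false_or, and_false, and_true, ne_eq] at hd <;>
    simp_all

theorem cc_backward {p q t : ℕ} (M : Fin p → Fin q → Prop)
    (hne : ∀ i : Fin p, ∃ j, M i j)
    (D : Finset (CCVert p q)) (hD : IsVEDomSet (ccGraph M) ↑D)
    (hcard : D.card ≤ t + 1) :
    ∃ C : Finset (Fin q), (∀ i : Fin p, ∃ j ∈ C, M i j) ∧ C.card ≤ t := by
  classical
  rcases Nat.eq_zero_or_pos p with hp | hp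
  · refine ⟨∅, fun i => absurd i.2 (by omega), by simp⟩
  have j0 : Fin q := (hne ⟨0, hp⟩).choose
  set g : CCVert p q → Fin q := fun v =>
    match v with
    | .a i => (hne i).choose
    | .z i => (hne i).choose
    | .b j => j
    | _ => j0 with hg
  set isABZ : CCVert p q → Prop := fun v =>
    match v with
    | .a _ => True | .b _ => True | .z _ => True
    | _ => False with hABZ
  -- the edge w r'
  have hadj : (ccGraph M).Adj .w .r' := by
    refine SimpleGraph.fromRel_adj _ _ _ |>.mpr ⟨by simp, Or.inl trivial⟩
  obtain ⟨e, he, heD⟩ := hD hadj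
  have heABZ : ¬ isABZ e := by
    rcases cc_nbhd_wr' M e he with h | h | h <;> subst h <;> simp [hABZ]
  have heD' : e ∈ D := heD
  have hsub : D.filter isABZ ⊆ D.erase e := by
    intro x hx
    simp only [Finset.mem_filter] at hx
    refine Finset.mem_erase.mpr ⟨?_, hx.1⟩
    rintro rfl; exact heABZ hx.2
  have hcard' : ((D.filter isABZ).image g).card ≤ t := by
    calc ((D.filter isABZ).image g).card ≤ (D.filter isABZ).card := Finset.card_image_le
      _ ≤ (D.erase e).card := Finset.card_le_card hsub
      _ = D.card - 1 := Finset.card_erase_of_mem heD'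
      _ ≤ t := by omega
  refine ⟨(D.filter isABZ).image g, fun i => ?_, hcard'⟩
  have hadj2 : (ccGraph M).Adj (.a i) (.z i) := by
    refine SimpleGraph.fromRel_adj _ _ _ |>.mpr ⟨by simp, Or.inl rfl⟩
  obtain ⟨d, hd, hdD⟩ := hD hadj2
  have hdD' : d ∈ D := hdD
  rcases cc_nbhd_az M i d hd with h | h | ⟨j, h, hMj⟩
  · exact ⟨(hne i).choose, Finset.mem_image.mpr ⟨d, Finset.mem_filter.mpr
      ⟨hdD', by rw [h]; trivial⟩, by rw [h]⟩, (hne i).choose_spec⟩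
  · exact ⟨(hne i).choose, Finset.mem_image.mpr ⟨d, Finset.mem_filter.mpr
      ⟨hdD', by rw [h]; trivial⟩, by rw [h]⟩, (hne i).choose_spec⟩
  · exact ⟨j, Finset.mem_image.mpr ⟨d, Finset.mem_filter.mpr
      ⟨hdD', by rw [h]; trivial⟩, by rw [h]⟩, hMj⟩
end

section
/- Structural lemma for convex bipartite graphs: let G = (X ∪ Y, E) be a connected convex bipartite graph with a lexicographic convex ordering, let x_r = right(y_1) (the largest-index neighbour of y_1), and let y_s = right(x_r). Then the vertex x_r vertex-edge dominates every edge incident to any vertex of {y_1, …, y_s}, and for every x_i with i < r, N(x_i) ⊆ N(x_r). -/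
open SimpleGraph

theorem convex_structural {V : Type*} {n₁ n₂ : ℕ} [NeZero n₂] (G : SimpleGraph V)
    (x : Fin n₁ → V) (y : Fin n₂ → V)
    (hbip : ∀ (i : Fin n₁) (v : V), G.Adj (x i) v → ∃ k : Fin n₂, v = y k)
    (left right : Fin n₁ → Fin n₂)
    (hleft : ∀ i, G.Adj (x i) (y (left i)))
    (hright : ∀ i, G.Adj (x i) (y (right i)))
    (hbounds : ∀ i k, G.Adj (x i) (y k) → left i ≤ k ∧ k ≤ right i)
    (hconv : ∀ i k, left i ≤ k → k ≤ right i → G.Adj (x i) (y k))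
    (hlex : ∀ i j : Fin n₁, i < j →
      left i < left j ∨ (left i = left j ∧ right i ≤ right j))
    (hconn : G.Connected)
    (r : Fin n₁) (hr : G.Adj (x r) (y 0))
    (hrmax : ∀ i : Fin n₁, G.Adj (x i) (y 0) → i ≤ r) :
    (∀ k : Fin n₂, k ≤ right r → ∀ u v : V, G.Adj u v → (u = y k ∨ v = y k) →
      x r ∈ closedNbhd G u ∪ closedNbhd G v) ∧
    (∀ i : Fin n₁, i < r → G.neighborSet (x i) ⊆ G.neighborSet (x r)) := by
  have hlr : left r = 0 := le_antisymm (hbounds r 0 hr).1 (Fin.zero_le _)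
  constructor
  · intro k hk u v _ huv
    rcases huv with h | h
    · left
      exact Set.mem_insert_iff.mpr (Or.inr (by
        rw [h]; exact (hconv r k (hlr ▸ Fin.zero_le _) hk).symm))
    · right
      exact Set.mem_insert_iff.mpr (Or.inr (by
        rw [h]; exact (hconv r k (hlr ▸ Fin.zero_le _) hk).symm))
  · intro i hir v hv
    rcases hlex i r hir with h | ⟨_, hri⟩
    · exfalso; rw [hlr] at h; simp [Fin.lt_def] at h
    · obtain ⟨k, rfl⟩ := hbip i v hv
      exact hconv r k (hlr ▸ Fin.zero_le _) ((hbounds i k hv).2.trans hri)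
end

section
/- Exchange lemma in convex bipartite graphs: with the lex-convex ordering as above and x_r = right(y_1), if D is a minimum vertex-edge dominating set of G containing some x_β ∈ N(y_1), then D' = (D \ {x_β}) ∪ {x_r} is also a minimum vertex-edge dominating set of G containing x_r. -/
/-!
Since `x_β` and `x_r` both have `y_1` as their leftmost neighbour and `β ≤ r`, the lex-convex
ordering gives `right(x_β) ≤ right(x_r)`, so `N(x_β) ⊆ N(x_r)`. Replacing a dominating vertex by
one whose neighbourhood contains its own preserves vertex-edge domination and does not increase
the size, so minimality of `D` makes the new set minimum as well.
-/

open SimpleGraph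

theorem Set.ncard_sdiff_singleton_union_singleton_le {α : Type*} {s : Set α} {a : α} (b : α)
    (hs : s.Finite) (ha : a ∈ s) : (s \ {a} ∪ {b}).ncard ≤ s.ncard :=
  calc (s \ {a} ∪ {b}).ncard = (insert b (s \ {a})).ncard := by rw [Set.union_singleton]
    _ ≤ (s \ {a}).ncard + 1 := Set.ncard_insert_le _ _
    _ = s.ncard := Set.ncard_sdiff_singleton_add_one ha hs

section VertexEdgeDomination

variable {V : Type*} {G : SimpleGraph V} {D : Set V} {a b : V}

theorem mem_closedNbhd_union_of_neighborSet_subset {u v : V} (huv : G.Adj u v)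
    (hab : G.neighborSet a ⊆ G.neighborSet b) (ha : a ∈ closedNbhd G u ∪ closedNbhd G v) :
    b ∈ closedNbhd G u ∪ closedNbhd G v := by
  have hab' : ∀ w, G.Adj a w → G.Adj w b := fun w h => (hab h : G.Adj b w).symm
  simp only [closedNbhd, Set.mem_union, Set.mem_insert_iff, mem_neighborSet] at ha ⊢
  rcases ha with (rfl | hua) | (rfl | hva)
  · exact Or.inr (Or.inr (hab' v huv))
  · exact Or.inl (Or.inr (hab' u hua.symm))
  · exact Or.inl (Or.inr (hab' u huv.symm))
  · exact Or.inr (Or.inr (hab' v hva.symm))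

theorem IsVEDomSet.sdiff_singleton_union_singleton (hD : IsVEDomSet G D)
    (hab : G.neighborSet a ⊆ G.neighborSet b) : IsVEDomSet G (D \ {a} ∪ {b}) := by
  intro u v huv
  obtain ⟨w, hw, hwD⟩ := hD huv
  by_cases hwa : w = a
  · subst hwa
    exact ⟨b, mem_closedNbhd_union_of_neighborSet_subset huv hab hw, Or.inr rfl⟩
  · exact ⟨w, hw, Or.inl ⟨hwD, hwa⟩⟩

theorem vedNumber_le_ncard (hD : IsVEDomSet G D) : vedNumber G ≤ D.ncard :=
  Nat.sInf_le ⟨D, hD, rfl⟩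

theorem IsVEDomSet.ncard_sdiff_singleton_union_singleton_eq_vedNumber (hD : IsVEDomSet G D)
    (hmin : D.ncard = vedNumber G) (hfin : D.Finite) (haD : a ∈ D)
    (hab : G.neighborSet a ⊆ G.neighborSet b) : (D \ {a} ∪ {b}).ncard = vedNumber G :=
  le_antisymm (hmin ▸ Set.ncard_sdiff_singleton_union_singleton_le b hfin haD)
    (vedNumber_le_ncard (hD.sdiff_singleton_union_singleton hab))

end VertexEdgeDomination

theorem right_le_right_of_left_eq {ι κ μ : Type*} [LinearOrder ι] [Preorder κ] [Preorder μ]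
    {left : ι → κ} {right : ι → μ}
    (hlex : ∀ i j, i < j → left i < left j ∨ (left i = left j ∧ right i ≤ right j))
    {i j : ι} (hij : i ≤ j) (hleft : left i = left j) : right i ≤ right j := by
  rcases hij.lt_or_eq with hlt | rfl
  · exact (hlex i j hlt).resolve_left (hleft ▸ lt_irrefl _) |>.2
  · exact le_rfl

theorem neighborSet_subset_of_adj_first {V : Type*} {n₁ n₂ : ℕ} [NeZero n₂] {G : SimpleGraph V}
    {x : Fin n₁ → V} {y : Fin n₂ → V}
    (hbip : ∀ (i : Fin n₁) (v : V), G.Adj (x i) v → ∃ k : Fin n₂, v = y k)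
    {left right : Fin n₁ → Fin n₂}
    (hbounds : ∀ i k, G.Adj (x i) (y k) → left i ≤ k ∧ k ≤ right i)
    (hconv : ∀ i k, left i ≤ k → k ≤ right i → G.Adj (x i) (y k))
    (hlex : ∀ i j : Fin n₁, i < j →
      left i < left j ∨ (left i = left j ∧ right i ≤ right j))
    {r β : Fin n₁} (hr : G.Adj (x r) (y 0)) (hβ : G.Adj (x β) (y 0)) (hβr : β ≤ r) :
    G.neighborSet (x β) ⊆ G.neighborSet (x r) := by
  have hleft_eq_zero : ∀ i, G.Adj (x i) (y 0) → left i = 0 :=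
    fun i h => le_antisymm (hbounds i 0 h).1 (Fin.zero_le _)
  have hright : right β ≤ right r := right_le_right_of_left_eq hlex hβr
    ((hleft_eq_zero β hβ).trans (hleft_eq_zero r hr).symm)
  intro v hv
  obtain ⟨k, rfl⟩ := hbip β v hv
  exact hconv r k (hleft_eq_zero r hr ▸ Fin.zero_le k) ((hbounds β k hv).2.trans hright)

theorem convex_exchange_general {V : Type*} {n₁ n₂ : ℕ} [NeZero n₂] [Fintype V] (G : SimpleGraph V)
    (x : Fin n₁ → V) (y : Fin n₂ → V)
    (hbip : ∀ (i : Fin n₁) (v : V), G.Adj (x i) v → ∃ k : Fin n₂, v = y k)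
    (left right : Fin n₁ → Fin n₂)
    (hbounds : ∀ i k, G.Adj (x i) (y k) → left i ≤ k ∧ k ≤ right i)
    (hconv : ∀ i k, left i ≤ k → k ≤ right i → G.Adj (x i) (y k))
    (hlex : ∀ i j : Fin n₁, i < j →
      left i < left j ∨ (left i = left j ∧ right i ≤ right j))
    (r : Fin n₁) (hr : G.Adj (x r) (y 0))
    (hrmax : ∀ i : Fin n₁, G.Adj (x i) (y 0) → i ≤ r)
    (D : Set V) (hD : IsVEDomSet G D) (hmin : D.ncard = vedNumber G)
    (β : Fin n₁) (hβ : G.Adj (x β) (y 0)) (hβD : x β ∈ D) :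
    IsVEDomSet G ((D \ {x β}) ∪ {x r}) ∧
      ((D \ {x β}) ∪ {x r}).ncard = vedNumber G ∧
      x r ∈ (D \ {x β}) ∪ {x r} := by
  have hsub : G.neighborSet (x β) ⊆ G.neighborSet (x r) :=
    neighborSet_subset_of_adj_first hbip hbounds hconv hlex hr hβ (hrmax β hβ)
  exact ⟨hD.sdiff_singleton_union_singleton hsub,
    hD.ncard_sdiff_singleton_union_singleton_eq_vedNumber hmin D.toFinite hβD hsub, Or.inr rfl⟩

theorem convex_exchange {V : Type*} {n₁ n₂ : ℕ} [NeZero n₂] [Fintype V] (G : SimpleGraph V)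
    (x : Fin n₁ → V) (y : Fin n₂ → V)
    (hbip : ∀ (i : Fin n₁) (v : V), G.Adj (x i) v → ∃ k : Fin n₂, v = y k)
    (left right : Fin n₁ → Fin n₂)
    (hleft : ∀ i, G.Adj (x i) (y (left i)))
    (hright : ∀ i, G.Adj (x i) (y (right i)))
    (hbounds : ∀ i k, G.Adj (x i) (y k) → left i ≤ k ∧ k ≤ right i)
    (hconv : ∀ i k, left i ≤ k → k ≤ right i → G.Adj (x i) (y k))
    (hlex : ∀ i j : Fin n₁, i < j →
      left i < left j ∨ (left i = left j ∧ right i ≤ right j))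
    (hconn : G.Connected)
    (r : Fin n₁) (hr : G.Adj (x r) (y 0))
    (hrmax : ∀ i : Fin n₁, G.Adj (x i) (y 0) → i ≤ r)
    (D : Set V) (hD : IsVEDomSet G D) (hmin : D.ncard = vedNumber G)
    (β : Fin n₁) (hβ : G.Adj (x β) (y 0)) (hβD : x β ∈ D) :
    IsVEDomSet G ((D \ {x β}) ∪ {x r}) ∧
      ((D \ {x β}) ∪ {x r}).ncard = vedNumber G ∧
      x r ∈ (D \ {x β}) ∪ {x r} :=
  convex_exchange_general G x y hbip left right hbounds hconv hlex r hr hrmax D hD hmin β hβ hβD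
end
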